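/- Let K be a finite nonempty set, let T be a positive natural number, let η > 0 and B ≥ 0, let ℓ_t : K → ℝ for t = 0, …, T−1 satisfy 0 ≤ ℓ_t(k) ≤ B for all t and k, let p_0, …, p_{T−1} be probability distributions on K, and let q be a probability distribution on K that is absolutely continuous with respect to each p_t. Then Σ_{t=0}^{T−1} Σ_{k∈K} p_t(k)·ℓ_t(k) ≤ Σ_{t=0}^{T−1} Σ_{k∈K} q(k)·ℓ_t(k) + (1/η)·Σ_{t=0}^{T−1} KL(q ‖ p_t) + T·η·B²/8. -/

import Mathlib

/-!
Write `Z = ∑ₖ p(k) e^{-ηℓ(k)}`. Hoeffding's lemma bounds `log Z` from above by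
`-η ∑ₖ p(k)ℓ(k) + η²B²/8`, and concavity of the logarithm (the finite Donsker–Varadhan
inequality) bounds it from below by `-η ∑ₖ q(k)ℓ(k) - KL(q ‖ p)`. Comparing the two bounds and
dividing by `η` gives the bound at a single time step; summing over `t` gives the theorem.
-/

open Real Finset

section
variable {K : Type*} [Fintype K]

open MeasureTheory ProbabilityTheory in
/-- Hoeffding's lemma for the distribution with masses `p k`. -/
theorem sum_mul_exp_le_of_mem_Icc (p ℓ : K → ℝ) (hp_nonneg : ∀ k, 0 ≤ p k)
    (hp_sum : ∑ k, p k = 1) {a b : ℝ} (hℓ : ∀ k, ℓ k ∈ Set.Icc a b) (t : ℝ) :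
    ∑ k, p k * exp (t * ℓ k) ≤ exp (t * ∑ k, p k * ℓ k + t ^ 2 * (b - a) ^ 2 / 8) := by
  let _ : MeasurableSpace K := ⊤
  have : MeasurableSingletonClass K := ⟨fun _ => trivial⟩
  let P := PMF.ofFintype (fun k => ENNReal.ofReal (p k)) <| by
    rw [← ENNReal.ofReal_sum_of_nonneg fun k _ => hp_nonneg k, hp_sum, ENNReal.ofReal_one]
  have integral_eq (f : K → ℝ) : ∫ k, f k ∂P.toMeasure = ∑ k, p k * f k := by
    simp [P, PMF.integral_eq_sum, hp_nonneg]
  have hoeffding := (hasSubgaussianMGF_of_mem_Icc (μ := P.toMeasure)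
    (measurable_of_countable ℓ).aemeasurable (ae_of_all _ hℓ)).mgf_le t
  set m := ∑ k, p k * ℓ k
  have hc : ((‖b - a‖₊ / 2) ^ 2 : NNReal) * t ^ 2 / 2 = t ^ 2 * (b - a) ^ 2 / 8 := by
    push_cast
    rw [Real.norm_eq_abs, div_pow, sq_abs]
    ring
  rw [mgf, integral_eq, integral_eq, hc] at hoeffding
  calc ∑ k, p k * exp (t * ℓ k) = exp (t * m) * ∑ k, p k * exp (t * (ℓ k - m)) := by
        rw [mul_sum]
        refine sum_congr rfl fun k _ => ?_
        rw [mul_left_comm, ← exp_add]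
        ring_nf
    _ ≤ exp (t * m) * exp (t ^ 2 * (b - a) ^ 2 / 8) := by gcongr
    _ = _ := (exp_add _ _).symm

theorem sum_mul_log_div_le_log_sum (w q : K → ℝ) (hw : ∀ k, 0 ≤ w k)
    (hq_nonneg : ∀ k, 0 ≤ q k) (hq_sum : ∑ k, q k = 1) (habs : ∀ k, 0 < q k → 0 < w k) :
    ∑ k, q k * log (w k / q k) ≤ log (∑ k, w k) := by
  obtain ⟨k₀, hk₀⟩ : ∃ k, 0 < q k := by
    by_contra! h
    simp [fun k => le_antisymm (h k) (hq_nonneg k)] at hq_sum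
  set Z := ∑ k, w k
  have hZ : 0 < Z := sum_pos' (fun k _ => hw k) ⟨k₀, mem_univ _, habs k₀ hk₀⟩
  have termwise (k : K) : q k * log (w k / q k) - q k * log Z ≤ w k / Z - q k := by
    rcases (hq_nonneg k).eq_or_lt with hq | hq
    · simp [← hq, div_nonneg (hw k) hZ.le]
    · have hwq : 0 < w k / q k := div_pos (habs k hq) hq
      have hx : 0 < w k / q k / Z := div_pos hwq hZ
      calc q k * log (w k / q k) - q k * log Z = q k * log (w k / q k / Z) := by
            rw [log_div hwq.ne' hZ.ne', mul_sub]
        _ ≤ q k * (w k / q k / Z - 1) := by gcongr; exact log_le_sub_one_of_pos hx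
        _ = w k / Z - q k := by field_simp
  have summed := sum_le_sum fun k (_ : k ∈ univ) => termwise k
  rw [sum_sub_distrib, sum_sub_distrib, ← sum_mul, hq_sum, ← sum_div, div_self hZ.ne'] at summed
  linarith

theorem single_step_regret_bound {η : ℝ} (hη : 0 < η) (ℓ p q : K → ℝ) {a b : ℝ}
    (hℓ : ∀ k, ℓ k ∈ Set.Icc a b) (hp_nonneg : ∀ k, 0 ≤ p k) (hp_sum : ∑ k, p k = 1)
    (hq_nonneg : ∀ k, 0 ≤ q k) (hq_sum : ∑ k, q k = 1) (habs : ∀ k, 0 < q k → 0 < p k) :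
    ∑ k, p k * ℓ k
      ≤ ∑ k, q k * ℓ k + 1 / η * ∑ k, q k * log (q k / p k) + η * (b - a) ^ 2 / 8 := by
  set Z := ∑ k, p k * exp (-η * ℓ k)
  have hZ : 0 < Z := by
    obtain ⟨k, -, hk⟩ := exists_lt_of_sum_lt (s := univ) (f := fun _ => (0 : ℝ)) (g := p)
      (by simp [hp_sum])
    exact sum_pos' (fun k _ => by have := hp_nonneg k; positivity) ⟨k, mem_univ _, by positivity⟩
  have upper : log Z ≤ -η * ∑ k, p k * ℓ k + η ^ 2 * (b - a) ^ 2 / 8 := by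
    rw [log_le_iff_le_exp hZ]
    simpa [Z, neg_sq] using sum_mul_exp_le_of_mem_Icc p ℓ hp_nonneg hp_sum hℓ (-η)
  have lower : -η * ∑ k, q k * ℓ k - ∑ k, q k * log (q k / p k) ≤ log Z := by
    refine le_of_eq_of_le ?_ (sum_mul_log_div_le_log_sum (fun k => p k * exp (-η * ℓ k)) q
      (fun k => by have := hp_nonneg k; positivity) hq_nonneg hq_sum
      (fun k hk => by have := habs k hk; positivity))
    rw [mul_sum, ← sum_sub_distrib]
    refine sum_congr rfl fun k _ => ?_
    rcases (hq_nonneg k).eq_or_lt with hq | hq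
    · simp [← hq]
    · have hp := habs k hq
      rw [mul_div_right_comm, log_mul (by positivity) (exp_pos _).ne', log_exp,
        log_div hp.ne' hq.ne', log_div hq.ne' hp.ne']
      ring
  field_simp
  linarith

end

theorem cumulative_regret_bound_general
    {K : Type*} [Fintype K]
    (T : ℕ)
    (η B : ℝ) (hη : 0 < η)
    (ℓ : Fin T → K → ℝ) (hℓ : ∀ t k, 0 ≤ ℓ t k ∧ ℓ t k ≤ B)
    (p : Fin T → K → ℝ)
    (hp_nonneg : ∀ t k, 0 ≤ p t k) (hp_sum : ∀ t, ∑ k, p t k = 1)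
    (q : K → ℝ)
    (hq_nonneg : ∀ k, 0 ≤ q k) (hq_sum : ∑ k, q k = 1)
    (habs : ∀ t k, 0 < q k → 0 < p t k) :
    (∑ t, ∑ k, p t k * ℓ t k)
      ≤ (∑ t, ∑ k, q k * ℓ t k)
        + (1 / η) * (∑ t, ∑ k, q k * Real.log (q k / p t k))
        + (T : ℝ) * η * B ^ 2 / 8 := by
  calc (∑ t, ∑ k, p t k * ℓ t k)
      ≤ ∑ t, (∑ k, q k * ℓ t k + 1 / η * ∑ k, q k * log (q k / p t k) + η * B ^ 2 / 8) :=
        sum_le_sum fun t _ => by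
          simpa using single_step_regret_bound hη (ℓ t) (p t) q (hℓ t) (hp_nonneg t) (hp_sum t)
            hq_nonneg hq_sum (habs t)
    _ = _ := by
        rw [sum_add_distrib, sum_add_distrib, ← mul_sum, sum_const, card_univ, Fintype.card_fin,
          nsmul_eq_mul]
        ring

/-- Cumulative regret bound: summing the single-time-step bound over
`t = 0, …, T-1`. -/
theorem cumulative_regret_bound
    {K : Type*} [Fintype K] [Nonempty K]
    (T : ℕ) (hT : 0 < T)
    (η B : ℝ) (hη : 0 < η) (hB : 0 ≤ B)
    (ℓ : Fin T → K → ℝ) (hℓ : ∀ t k, 0 ≤ ℓ t k ∧ ℓ t k ≤ B)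
    (p : Fin T → K → ℝ)
    (hp_nonneg : ∀ t k, 0 ≤ p t k) (hp_sum : ∀ t, ∑ k, p t k = 1)
    (q : K → ℝ)
    (hq_nonneg : ∀ k, 0 ≤ q k) (hq_sum : ∑ k, q k = 1)
    (habs : ∀ t k, 0 < q k → 0 < p t k) :
    (∑ t, ∑ k, p t k * ℓ t k)
      ≤ (∑ t, ∑ k, q k * ℓ t k)
        + (1 / η) * (∑ t, ∑ k, q k * Real.log (q k / p t k))
        + (T : ℝ) * η * B ^ 2 / 8 :=
  cumulative_regret_bound_general T η B hη ℓ hℓ p hp_nonneg hp_sum q hq_nonneg hq_sum habs
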